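/- Let A ∈ ℝ^{n×n} and B ∈ ℝ^{n×m}, and suppose the controllability matrix 𝒞 = [B | -AB | A²B | ⋯ | (-A)^{n-1}B] ∈ ℝ^{n×nm} has rank strictly less than n. Then there exists a nonzero vector α ∈ ℝ^n such that for every continuous control u : [T₀, T₁] → ℝ^m, one has αᵀ ∫_{T₀}^{T₁} exp(-(s - T₀)A) B u(s) ds = 0; in particular the reachable set of the controlled quadratic gradient flow is contained in a proper affine subspace of ℝ^n, so the system is not controllable. -/

import Mathlib

/-!
A rank defect of `𝒞` gives a nonzero `α` with `αᵀ (-A)^i B = 0` for `i < n`. By Cayley–Hamilton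
every element of the algebra `ℝ[-A]` is a combination of these powers, so `αᵀ X B = 0` for all
`X ∈ ℝ[-A]`. That algebra is a closed subspace of the finite-dimensional matrix space, hence
contains `exp(-(s - T₀)A)`; thus the integrand is pointwise orthogonal to `α`, and so is its
integral.
-/

open scoped Matrix

/-- The controllability (Pontryagin–Kalman) matrix
`𝒞 = [B | -AB | A²B | ⋯ | (-A)^{n-1}B]`, indexed so that the block of column index `(i, j)`
is the `j`-th column of `(-A)^i B`. -/
def ctrlMatrix {n m : ℕ} (A : Matrix (Fin n) (Fin n) ℝ) (B : Matrix (Fin n) (Fin m) ℝ) :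
    Matrix (Fin n) (Fin n × Fin m) ℝ :=
  Matrix.of fun i p => ((-A) ^ (p.1 : ℕ) * B) i p.2

open Polynomial

namespace Matrix

theorem exists_vecMul_eq_zero_of_rank_lt {K m ι : Type*} [Field K] [Fintype m] [Fintype ι]
    (M : Matrix m ι K) (h : M.rank < Fintype.card m) : ∃ v ≠ 0, v ᵥ* M = 0 := by
  have hnotinj : ¬ Function.Injective Mᵀ.mulVecLin := fun hinj => by
    have := LinearMap.finrank_range_of_inj hinj
    rw [← Matrix.rank, rank_transpose, Module.finrank_fintype_fun_eq_card] at this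
    exact h.ne this
  obtain ⟨v, hv, hv0⟩ : ∃ v, Mᵀ.mulVecLin v = 0 ∧ v ≠ 0 := by
    simpa [injective_iff_map_eq_zero] using hnotinj
  exact ⟨v, hv0, by simpa [mulVec_transpose] using hv⟩

theorem aeval_mem_span_pow {R n : Type*} [CommRing R] [Nontrivial R] [Fintype n] [DecidableEq n]
    (M : Matrix n n R) (p : R[X]) :
    aeval M p ∈ Submodule.span R (Set.range fun i : Fin (Fintype.card n) => M ^ (i : ℕ)) :=
  PowerBasis.mem_span_pow'.mpr ⟨p %ₘ M.charpoly,
    M.charpoly_degree_eq_dim ▸ degree_modByMonic_lt _ M.charpoly_monic,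
    M.aeval_eq_aeval_mod_charpoly p⟩

theorem vecMul_mul_eq_zero_of_mem_adjoin {R n ι : Type*} [CommRing R] [Nontrivial R]
    [Fintype n] [DecidableEq n] {M : Matrix n n R} {B : Matrix n ι R} {v : n → R}
    (hv : ∀ i < Fintype.card n, v ᵥ* (M ^ i * B) = 0) {X : Matrix n n R}
    (hX : X ∈ Algebra.adjoin R {M}) : v ᵥ* (X * B) = 0 := by
  replace hX : X ∈ Submodule.span R (Set.range fun i : Fin (Fintype.card n) => M ^ (i : ℕ)) := by
    rw [Algebra.adjoin_singleton_eq_range_aeval] at hX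
    obtain ⟨p, rfl⟩ := hX
    exact M.aeval_mem_span_pow p
  induction hX using Submodule.span_induction with
  | mem _ h => obtain ⟨i, rfl⟩ := h; exact hv i i.isLt
  | zero => simp
  | add _ _ _ _ h₁ h₂ => simp [Matrix.add_mul, vecMul_add, h₁, h₂]
  | smul _ _ _ h => simp [Matrix.smul_mul, vecMul_smul, h]

theorem exp_mem {𝕜 n : Type*} [NontriviallyNormedField 𝕜] [CompleteSpace 𝕜] [CharZero 𝕜]
    [Fintype n] [DecidableEq n]
    (S : Subalgebra 𝕜 (Matrix n n 𝕜)) {X : Matrix n n 𝕜} (hX : X ∈ S) :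
    NormedSpace.exp X ∈ S :=
  NormedSpace.exp_mem (R := 𝕜) (s := S) (Subalgebra.toSubmodule S).closed_of_finiteDimensional hX

end Matrix

theorem ContinuousLinearMap.map_intervalIntegral_eq_zero {E F : Type*} [NormedAddCommGroup E]
    [NormedSpace ℝ E] [CompleteSpace E] [NormedAddCommGroup F] [NormedSpace ℝ F]
    [CompleteSpace F] (L : E →L[ℝ] F) {f : ℝ → E} {a b : ℝ} {μ : MeasureTheory.Measure ℝ}
    (hf : ∀ s, L (f s) = 0) : L (∫ s in a..b, f s ∂μ) = 0 := by
  by_cases hfi : IntervalIntegrable f μ a b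
  · simp [← L.intervalIntegral_comp_comm hfi, hf]
  · rw [intervalIntegral.integral_undef hfi, map_zero]

theorem vecMul_pow_mul_eq_zero_of_vecMul_ctrlMatrix_eq_zero {n m : ℕ}
    {A : Matrix (Fin n) (Fin n) ℝ} {B : Matrix (Fin n) (Fin m) ℝ} {v : Fin n → ℝ}
    (hv : v ᵥ* ctrlMatrix A B = 0) : ∀ i < n, v ᵥ* ((-A) ^ i * B) = 0 :=
  fun i hi => funext fun j => congrFun hv (⟨i, hi⟩, j)

theorem not_controllable_of_rank_ctrlMatrix_lt_general
    {n m : ℕ} (A : Matrix (Fin n) (Fin n) ℝ) (B : Matrix (Fin n) (Fin m) ℝ)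
    (T₀ T₁ : ℝ)
    (hrank : (ctrlMatrix A B).rank < n) :
    ∃ α : Fin n → ℝ, α ≠ 0 ∧
      ∀ u : ℝ → Fin m → ℝ, Continuous u →
        α ⬝ᵥ (∫ s in T₀..T₁, (NormedSpace.exp (-((s - T₀) • A))).mulVec (B.mulVec (u s))) = 0 := by
  obtain ⟨α, hα0, hαC⟩ :=
    (ctrlMatrix A B).exists_vecMul_eq_zero_of_rank_lt (by simpa using hrank)
  have hα : ∀ i < Fintype.card (Fin n), α ᵥ* ((-A) ^ i * B) = 0 := by
    simpa using vecMul_pow_mul_eq_zero_of_vecMul_ctrlMatrix_eq_zero hαC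
  have hexp (s : ℝ) : α ᵥ* (NormedSpace.exp (-((s - T₀) • A)) * B) = 0 := by
    refine Matrix.vecMul_mul_eq_zero_of_mem_adjoin hα (Matrix.exp_mem _ ?_)
    rw [← smul_neg]
    exact Subalgebra.smul_mem _ (Algebra.self_mem_adjoin_singleton ℝ _) _
  refine ⟨α, hα0, fun u _ => ?_⟩
  exact (dotProductBilin ℝ ℝ α).toContinuousLinearMap.map_intervalIntegral_eq_zero
    fun s => by simp [Matrix.dotProduct_mulVec, hexp]

/-- If the controllability matrix has rank `< n`, then there is a nonzero `α ∈ ℝⁿ`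
orthogonal to `∫_{T₀}^{T₁} exp(-(s - T₀)A) B u(s) ds` for every continuous control `u`:
the system is not controllable. -/
theorem not_controllable_of_rank_ctrlMatrix_lt
    {n m : ℕ} (A : Matrix (Fin n) (Fin n) ℝ) (B : Matrix (Fin n) (Fin m) ℝ)
    (T₀ T₁ : ℝ) (hT : T₀ < T₁)
    (hrank : (ctrlMatrix A B).rank < n) :
    ∃ α : Fin n → ℝ, α ≠ 0 ∧
      ∀ u : ℝ → Fin m → ℝ, Continuous u →
        α ⬝ᵥ (∫ s in T₀..T₁, (NormedSpace.exp (-((s - T₀) • A))).mulVec (B.mulVec (u s))) = 0 :=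
  not_controllable_of_rank_ctrlMatrix_lt_general A B T₀ T₁ hrank
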